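/- For probability vectors p and q on I objects and any draw size K ≥ 1, the expected dissimilarity E[D(p,q)] between a draw from p and a draw from q is greater than or equal to the minimum of E[D(p,p)] and E[D(q,q)]. -/
import Mathlib


open Finset

/-- Expected dissimilarity between two independent unordered draws of size `K`
with replacement from `I` objects, one drawn according to `p`, the other
according to `q`. The dissimilarity between the two draws is
`1 - (1/K²) ∑ i (count X₁ i)(count X₂ i)`. -/
noncomputable def expectedDissim (K I : ℕ) (p q : Fin I → ℝ) : ℝ :=
  ∑ X₁ : Fin K → Fin I, ∑ X₂ : Fin K → Fin I,
    ((∏ k, p (X₁ k)) * (∏ k, q (X₂ k))) *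
      (1 - (1 / (K : ℝ) ^ 2) *
        ∑ i : Fin I, ((Finset.univ.filter fun k => X₁ k = i).card : ℝ) *
          ((Finset.univ.filter fun k => X₂ k = i).card : ℝ))

lemma sum_prod_pi {K I : ℕ} (g : Fin K → Fin I → ℝ) :
    ∑ X : Fin K → Fin I, ∏ k, g k (X k) = ∏ k, ∑ i, g k i := by
  rw [Finset.prod_univ_sum, Fintype.piFinset_univ]

lemma coord {K I : ℕ} (p f : Fin I → ℝ) (hp1 : ∑ i, p i = 1) (k₀ : Fin K) :
    ∑ X : Fin K → Fin I, (∏ k, p (X k)) * f (X k₀) = ∑ i, p i * f i := by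
  have h1 : ∀ X : Fin K → Fin I,
      (∏ k, p (X k)) * f (X k₀) = ∏ k, (p (X k) * (if k = k₀ then f (X k) else 1)) := by
    intro X
    rw [Finset.prod_mul_distrib, Finset.prod_ite_eq' Finset.univ k₀ (fun k => f (X k))]
    simp
  simp_rw [h1]
  rw [sum_prod_pi (fun k i => p i * (if k = k₀ then f i else 1))]
  have h2 : ∀ k : Fin K, (∑ i, p i * (if k = k₀ then f i else 1)) = if k = k₀ then ∑ i, p i * f i else 1 := by
    intro k
    by_cases h : k = k₀ <;> simp [h, hp1]
  simp_rw [h2]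
  rw [Finset.prod_ite_eq' Finset.univ k₀ (fun _ => ∑ i, p i * f i)]
  simp

lemma expectedDissim_eq (K I : ℕ) (hK : 1 ≤ K) (p q : Fin I → ℝ)
    (hp1 : ∑ i, p i = 1) (hq1 : ∑ i, q i = 1) :
    expectedDissim K I p q = 1 - ∑ i, p i * q i := by
  have hK0 : (K : ℝ) ≠ 0 := by positivity
  have hc : ∀ (X₁ X₂ : Fin K → Fin I),
      (∑ i : Fin I, ((Finset.univ.filter fun k => X₁ k = i).card : ℝ) *
        ((Finset.univ.filter fun k => X₂ k = i).card : ℝ))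
      = ∑ k : Fin K, ∑ l : Fin K, (if X₁ k = X₂ l then (1:ℝ) else 0) := by
    intro X₁ X₂
    have e1 : ∀ (X : Fin K → Fin I) i, ((Finset.univ.filter fun k => X k = i).card : ℝ)
        = ∑ k, if X k = i then (1:ℝ) else 0 := by
      intro X i
      rw [Finset.card_filter]
      push_cast
      rfl
    simp_rw [e1, Finset.sum_mul_sum]
    rw [Finset.sum_comm]
    refine Finset.sum_congr rfl fun k _ => ?_
    rw [Finset.sum_comm]
    refine Finset.sum_congr rfl fun l _ => ?_
    simp_rw [ite_mul, one_mul, zero_mul]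
    simp [Finset.sum_ite_eq, eq_comm]
  unfold expectedDissim
  simp_rw [hc, mul_sub, mul_one, Finset.sum_sub_distrib]
  have hA : ∑ X₁ : Fin K → Fin I, ∑ X₂ : Fin K → Fin I,
      (∏ k, p (X₁ k)) * (∏ k, q (X₂ k)) = 1 := by
    rw [← Finset.sum_mul_sum]
    rw [sum_prod_pi (fun _ i => p i), sum_prod_pi (fun _ i => q i)]
    simp [hp1, hq1]
  have hB : ∑ X₁ : Fin K → Fin I, ∑ X₂ : Fin K → Fin I,
      ((∏ k, p (X₁ k)) * (∏ k, q (X₂ k))) *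
        (1 / (K : ℝ) ^ 2 * ∑ k : Fin K, ∑ l : Fin K, (if X₁ k = X₂ l then (1:ℝ) else 0))
      = ∑ i, p i * q i := by
    have key : ∑ X₁ : Fin K → Fin I, ∑ X₂ : Fin K → Fin I,
        ((∏ k, p (X₁ k)) * (∏ k, q (X₂ k))) *
          (∑ k : Fin K, ∑ l : Fin K, (if X₁ k = X₂ l then (1:ℝ) else 0))
        = (K : ℝ) ^ 2 * ∑ i, p i * q i := by
      conv_lhs => simp only [Finset.mul_sum]
      have inner : ∀ k l : Fin K,
          ∑ X₁ : Fin K → Fin I, ∑ X₂ : Fin K → Fin I,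
            ((∏ m, p (X₁ m)) * (∏ m, q (X₂ m))) * (if X₁ k = X₂ l then (1:ℝ) else 0)
          = ∑ i, p i * q i := by
        intro k l
        have e2 : ∀ X₁ : Fin K → Fin I,
            ∑ X₂ : Fin K → Fin I, ((∏ m, p (X₁ m)) * (∏ m, q (X₂ m))) * (if X₁ k = X₂ l then (1:ℝ) else 0)
            = (∏ m, p (X₁ m)) * q (X₁ k) := by
          intro X₁
          have := coord (K := K) q (fun j => if X₁ k = j then (1:ℝ) else 0) hq1 l
          calc ∑ X₂ : Fin K → Fin I, ((∏ m, p (X₁ m)) * (∏ m, q (X₂ m))) * (if X₁ k = X₂ l then (1:ℝ) else 0)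
              = (∏ m, p (X₁ m)) * ∑ X₂ : Fin K → Fin I, (∏ m, q (X₂ m)) * (if X₁ k = X₂ l then (1:ℝ) else 0) := by
                rw [Finset.mul_sum]
                exact Finset.sum_congr rfl fun _ _ => by ring
            _ = (∏ m, p (X₁ m)) * ∑ j, q j * (if X₁ k = j then (1:ℝ) else 0) := by rw [this]
            _ = (∏ m, p (X₁ m)) * q (X₁ k) := by
                congr 1
                simp [mul_ite, Finset.sum_ite_eq]
        simp_rw [e2]
        exact coord p q hp1 k
      calc ∑ X₁ : Fin K → Fin I, ∑ X₂ : Fin K → Fin I, ∑ k : Fin K, ∑ l : Fin K,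
              ((∏ m, p (X₁ m)) * (∏ m, q (X₂ m))) * (if X₁ k = X₂ l then (1:ℝ) else 0)
          = ∑ X₁ : Fin K → Fin I, ∑ k : Fin K, ∑ X₂ : Fin K → Fin I, ∑ l : Fin K,
              ((∏ m, p (X₁ m)) * (∏ m, q (X₂ m))) * (if X₁ k = X₂ l then (1:ℝ) else 0) :=
            Finset.sum_congr rfl fun X₁ _ => Finset.sum_comm
        _ = ∑ k : Fin K, ∑ X₁ : Fin K → Fin I, ∑ X₂ : Fin K → Fin I, ∑ l : Fin K,
              ((∏ m, p (X₁ m)) * (∏ m, q (X₂ m))) * (if X₁ k = X₂ l then (1:ℝ) else 0) :=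
            Finset.sum_comm
        _ = ∑ k : Fin K, ∑ X₁ : Fin K → Fin I, ∑ l : Fin K, ∑ X₂ : Fin K → Fin I,
              ((∏ m, p (X₁ m)) * (∏ m, q (X₂ m))) * (if X₁ k = X₂ l then (1:ℝ) else 0) :=
            Finset.sum_congr rfl fun k _ => Finset.sum_congr rfl fun X₁ _ => Finset.sum_comm
        _ = ∑ k : Fin K, ∑ l : Fin K, ∑ X₁ : Fin K → Fin I, ∑ X₂ : Fin K → Fin I,
              ((∏ m, p (X₁ m)) * (∏ m, q (X₂ m))) * (if X₁ k = X₂ l then (1:ℝ) else 0) :=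
            Finset.sum_congr rfl fun k _ => Finset.sum_comm
        _ = ∑ _k : Fin K, ∑ _l : Fin K, ∑ i, p i * q i :=
            Finset.sum_congr rfl fun k _ => Finset.sum_congr rfl fun l _ => inner k l
        _ = (K : ℝ) ^ 2 * ∑ i, p i * q i := by
            simp only [Finset.sum_const, card_univ, Fintype.card_fin, nsmul_eq_mul]
            ring
    calc ∑ X₁ : Fin K → Fin I, ∑ X₂ : Fin K → Fin I,
            ((∏ k, p (X₁ k)) * (∏ k, q (X₂ k))) *
              (1 / (K : ℝ) ^ 2 * ∑ k : Fin K, ∑ l : Fin K, (if X₁ k = X₂ l then (1:ℝ) else 0))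
        = 1 / (K : ℝ) ^ 2 * ∑ X₁ : Fin K → Fin I, ∑ X₂ : Fin K → Fin I,
            ((∏ k, p (X₁ k)) * (∏ k, q (X₂ k))) *
              (∑ k : Fin K, ∑ l : Fin K, (if X₁ k = X₂ l then (1:ℝ) else 0)) := by
          simp_rw [Finset.mul_sum]
          refine Finset.sum_congr rfl fun X₁ _ => Finset.sum_congr rfl fun X₂ _ =>
            Finset.sum_congr rfl fun k _ => Finset.sum_congr rfl fun l _ => by ring
      _ = ∑ i, p i * q i := by rw [key]; field_simp
  rw [hA, hB]

/-- `E[D(p,q)]` is at least the minimum of `E[D(p,p)]` and `E[D(q,q)]`. -/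
theorem min_expectedDissim_le (K I : ℕ) (hK : 1 ≤ K) (hI : 1 ≤ I)
    (p q : Fin I → ℝ) (hp : ∀ i, 0 ≤ p i) (hp1 : ∑ i, p i = 1)
    (hq : ∀ i, 0 ≤ q i) (hq1 : ∑ i, q i = 1) :
    min (expectedDissim K I p p) (expectedDissim K I q q) ≤ expectedDissim K I p q := by
  rw [expectedDissim_eq K I hK p q hp1 hq1, expectedDissim_eq K I hK p p hp1 hp1,
    expectedDissim_eq K I hK q q hq1 hq1]
  set A := ∑ i, p i * p i with hA
  set B := ∑ i, q i * q i with hB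
  have h2 : ∑ i, p i * q i ≤ (A + B) / 2 := by
    have := Finset.sum_le_sum (fun i (_ : i ∈ Finset.univ) =>
      show p i * q i ≤ (p i * p i + q i * q i) / 2 by nlinarith [sq_nonneg (p i - q i)])
    calc ∑ i, p i * q i ≤ ∑ i, (p i * p i + q i * q i) / 2 := this
      _ = (A + B) / 2 := by rw [hA, hB, ← Finset.sum_add_distrib, Finset.sum_div]
  rcases le_total A B with hab | hab
  · refine le_trans (min_le_right _ _) ?_
    have : ∑ i, p i * q i ≤ B := by linarith
    linarith
  · refine le_trans (min_le_left _ _) ?_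
    have : ∑ i, p i * q i ≤ A := by linarith
    linarith
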